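/- Let H be a Hilbert space, K : H → Y a compact linear operator into a normed space Y, and for a closed subspace V ⊂ H define μ(V) := inf { 2‖v‖²_H : v ∈ V, ‖Kv‖_Y = 1 } (with μ(V) = +∞ if no such v exists). Then: (i) if V₁ ⊂ V₂ then μ(V₁) ≥ μ(V₂); (ii) if V_n is a decreasing sequence of closed subspaces with intersection V and the infimum defining each μ(V_n) is attained, then liminf_n μ(V_n) ≥ μ(V). -/
import Mathlib


open Filter Topology
open scoped ENNReal

/-- The quantity `μ(V) = inf { 2‖v‖² : v ∈ V, ‖K v‖ = 1 }`, with value `+∞` if no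
admissible `v` exists. -/
noncomputable def muVal {H Y : Type*} [NormedAddCommGroup H] [InnerProductSpace ℝ H]
    [NormedAddCommGroup Y] [NormedSpace ℝ Y]
    (K : H →L[ℝ] Y) (V : Submodule ℝ H) : ℝ≥0∞ :=
  ⨅ v ∈ {v : H | v ∈ V ∧ ‖K v‖ = 1}, ENNReal.ofReal (2 * ‖v‖ ^ 2)

theorem muVal_anti {H Y : Type*} [NormedAddCommGroup H] [InnerProductSpace ℝ H]
    [NormedAddCommGroup Y] [NormedSpace ℝ Y]
    (K : H →L[ℝ] Y) {V₁ V₂ : Submodule ℝ H} (h : V₁ ≤ V₂) :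
    muVal K V₂ ≤ muVal K V₁ :=
  iInf_le_iInf_of_subset fun v hv => ⟨h hv.1, hv.2⟩

theorem mu_monotone_and_semicontinuous {H Y : Type*} [NormedAddCommGroup H]
    [InnerProductSpace ℝ H] [CompleteSpace H]
    [NormedAddCommGroup Y] [NormedSpace ℝ Y]
    (K : H →L[ℝ] Y) (hK : IsCompactOperator K) :
    (∀ V₁ V₂ : Submodule ℝ H, IsClosed (V₁ : Set H) → IsClosed (V₂ : Set H) →
      V₁ ≤ V₂ → muVal K V₂ ≤ muVal K V₁) ∧
    ∀ (Vs : ℕ → Submodule ℝ H) (V : Submodule ℝ H),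
      (∀ n, IsClosed ((Vs n : Set H))) → IsClosed ((V : Set H)) →
      (∀ n, Vs (n + 1) ≤ Vs n) → V = ⨅ n, Vs n →
      (∀ n, {v : H | v ∈ Vs n ∧ ‖K v‖ = 1}.Nonempty →
        ∃ v, v ∈ Vs n ∧ ‖K v‖ = 1 ∧ ENNReal.ofReal (2 * ‖v‖ ^ 2) = muVal K (Vs n)) →
      muVal K V ≤ liminf (fun n => muVal K (Vs n)) atTop := by
  refine ⟨fun V₁ V₂ _ _ h => muVal_anti K h, ?_⟩
  intro Vs V hVsc hVc hdec hV hmin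
  set L := liminf (fun n => muVal K (Vs n)) atTop with hLdef
  by_cases hLtop : L = ⊤
  · rw [hLtop]; exact le_top
  have hanti : Antitone Vs := antitone_nat_of_succ_le hdec
  have hmono : Monotone fun n => muVal K (Vs n) := fun n m hnm => muVal_anti K (hanti hnm)
  have hle : ∀ n, muVal K (Vs n) ≤ L := by
    intro n
    rw [hLdef, liminf_eq_iSup_iInf_of_nat]
    have h1 : muVal K (Vs n) ≤ ⨅ i ≥ n, muVal K (Vs i) := le_iInf₂ fun i hi => hmono hi
    exact h1.trans (le_iSup (fun n => ⨅ i ≥ n, muVal K (Vs i)) n)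
  have htend : Tendsto (fun n => muVal K (Vs n)) atTop (𝓝 (⨆ n, muVal K (Vs n))) :=
    tendsto_atTop_iSup hmono
  have hLsup : L = ⨆ n, muVal K (Vs n) := by rw [hLdef, htend.liminf_eq]
  have htend' : Tendsto (fun n => muVal K (Vs n)) atTop (𝓝 L) := hLsup ▸ htend
  set ℓ := L.toReal with hldef
  have hne : ∀ n, {v : H | v ∈ Vs n ∧ ‖K v‖ = 1}.Nonempty := by
    intro n
    by_contra h
    rw [Set.not_nonempty_iff_eq_empty] at h
    have : muVal K (Vs n) = ⊤ := by simp [muVal, h]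
    exact hLtop (top_le_iff.1 (this ▸ hle n))
  choose v hv1 hv2 hv3 using fun n => hmin n (hne n)
  set a : ℕ → ℝ := fun n => 2 * ‖v n‖ ^ 2 with hadef
  have haμ : ∀ n, (muVal K (Vs n)).toReal = a n := fun n => by
    rw [← hv3]; exact ENNReal.toReal_ofReal (by positivity)
  have ha : Tendsto a atTop (𝓝 ℓ) := by
    have := (ENNReal.tendsto_toReal hLtop).comp htend'
    simpa only [Function.comp_def, haμ] using this
  have haℓ : ∀ n, a n ≤ ℓ := fun n => by
    rw [← haμ n]; exact ENNReal.toReal_mono hLtop (hle n)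
  -- bound on the minimizers
  set R := Real.sqrt (ℓ / 2) with hRdef
  have hvR : ∀ n, v n ∈ Metric.closedBall (0 : H) R := by
    intro n
    rw [Metric.mem_closedBall, dist_zero_right]
    have h0 : 2 * ‖v n‖ ^ 2 ≤ ℓ := haℓ n
    have h1 : ‖v n‖ ^ 2 ≤ ℓ / 2 := by linarith
    calc ‖v n‖ = Real.sqrt (‖v n‖ ^ 2) := (Real.sqrt_sq (norm_nonneg _)).symm
      _ ≤ R := Real.sqrt_le_sqrt h1
  -- compactness: extract a convergent subsequence of `K (v n)`
  have hcomp : IsCompact (closure ((K : H →ₗ[ℝ] Y) '' Metric.closedBall (0 : H) R)) :=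
    IsCompactOperator.isCompact_closure_image_closedBall (𝕜₁ := ℝ) hK R
  have hmemc : ∀ n, K (v n) ∈ closure ((K : H →ₗ[ℝ] Y) '' Metric.closedBall (0 : H) R) :=
    fun n => subset_closure ⟨v n, hvR n, rfl⟩
  obtain ⟨y, -, φ, hφ, hyt⟩ := hcomp.tendsto_subseq hmemc
  have hy1 : ‖y‖ = 1 := by
    have h1 : Tendsto (fun k => ‖K (v (φ k))‖) atTop (𝓝 ‖y‖) := hyt.norm
    have h2 : Tendsto (fun _ : ℕ => (1 : ℝ)) atTop (𝓝 ‖y‖) := by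
      simpa [hv2] using h1
    exact tendsto_nhds_unique h2 tendsto_const_nhds
  -- projections to atTop on ℕ × ℕ
  have hfst : Tendsto (fun p : ℕ × ℕ => p.1) atTop atTop := by
    rw [← prod_atTop_atTop_eq]; exact tendsto_fst
  have hsnd : Tendsto (fun p : ℕ × ℕ => p.2) atTop atTop := by
    rw [← prod_atTop_atTop_eq]; exact tendsto_snd
  set t : ℕ × ℕ → ℝ := fun p => ‖K (v (φ p.1)) + K (v (φ p.2))‖ with htdef
  have ht : Tendsto t atTop (𝓝 2) := by
    have h1 : Tendsto (fun p : ℕ × ℕ => K (v (φ p.1))) atTop (𝓝 y) := hyt.comp hfst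
    have h2 : Tendsto (fun p : ℕ × ℕ => K (v (φ p.2))) atTop (𝓝 y) := hyt.comp hsnd
    have h3 := (h1.add h2).norm
    have h4 : ‖y + y‖ = 2 := by
      rw [← two_smul ℝ y, norm_smul, hy1]; norm_num
    rwa [h4] at h3
  have hminT : Tendsto (fun p : ℕ × ℕ => min (φ p.1) (φ p.2)) atTop atTop := by
    refine tendsto_atTop.2 fun b => ?_
    refine eventually_atTop.2 ⟨(b, b), fun p hp => ?_⟩
    exact le_min (hp.1.trans (hφ.le_apply)) (hp.2.trans (hφ.le_apply))
  have hamin : Tendsto (fun p : ℕ × ℕ => a (min (φ p.1) (φ p.2))) atTop (𝓝 ℓ) :=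
    ha.comp hminT
  have haφ1 : Tendsto (fun p : ℕ × ℕ => a (φ p.1)) atTop (𝓝 ℓ) :=
    ha.comp (hφ.tendsto_atTop.comp hfst)
  have haφ2 : Tendsto (fun p : ℕ × ℕ => a (φ p.2)) atTop (𝓝 ℓ) :=
    ha.comp (hφ.tendsto_atTop.comp hsnd)
  -- the sequence of minimizers along φ is Cauchy
  set B : ℕ × ℕ → ℝ := fun p => a (φ p.1) + a (φ p.2) - a (min (φ p.1) (φ p.2)) * t p ^ 2 / 2
    with hBdef
  have hB : Tendsto B atTop (𝓝 0) := by
    have h := (haφ1.add haφ2).sub (((hamin.mul (ht.pow 2)).div_const 2))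
    have : ℓ + ℓ - ℓ * 2 ^ 2 / 2 = 0 := by ring
    rwa [this] at h
  have hkey : ∀ᶠ p : ℕ × ℕ in atTop, ‖v (φ p.1) - v (φ p.2)‖ ^ 2 ≤ B p := by
    filter_upwards [ht.eventually (eventually_gt_nhds (by norm_num : (0:ℝ) < 2))] with p hp
    set n := φ p.1
    set m := φ p.2
    set q := min n m
    -- the normalized midpoint is admissible in `Vs q`
    have hsmem : v n + v m ∈ Vs q :=
      Submodule.add_mem _ (hanti (min_le_left n m) (hv1 n)) (hanti (min_le_right n m) (hv1 m))
    have hKs : K (v n + v m) = K (v n) + K (v m) := map_add K _ _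
    have hu1 : (t p)⁻¹ • (v n + v m) ∈ Vs q := Submodule.smul_mem _ _ hsmem
    have hu2 : ‖K ((t p)⁻¹ • (v n + v m))‖ = 1 := by
      rw [map_smul, norm_smul, hKs, norm_inv, Real.norm_eq_abs, abs_of_pos hp]
      exact inv_mul_cancel₀ hp.ne'
    have hμq : muVal K (Vs q) ≤ ENNReal.ofReal (2 * ‖(t p)⁻¹ • (v n + v m)‖ ^ 2) :=
      iInf₂_le _ ⟨hu1, hu2⟩
    have haq : a q ≤ 2 * ‖(t p)⁻¹ • (v n + v m)‖ ^ 2 := by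
      rw [← haμ q]
      refine le_trans (ENNReal.toReal_mono ENNReal.ofReal_ne_top hμq) ?_
      rw [ENNReal.toReal_ofReal (by positivity)]
    have hnormu : ‖(t p)⁻¹ • (v n + v m)‖ ^ 2 = ‖v n + v m‖ ^ 2 / t p ^ 2 := by
      rw [norm_smul, norm_inv, Real.norm_eq_abs, abs_of_pos hp, mul_pow, inv_pow]
      ring
    have hsq : a q * t p ^ 2 / 2 ≤ ‖v n + v m‖ ^ 2 := by
      rw [hnormu] at haq
      have ht2 : (0:ℝ) < t p ^ 2 := by positivity
      calc a q * t p ^ 2 / 2 ≤ (2 * (‖v n + v m‖ ^ 2 / t p ^ 2)) * t p ^ 2 / 2 := by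
            gcongr
        _ = ‖v n + v m‖ ^ 2 := by field_simp
    -- parallelogram law
    have hpar := parallelogram_law_with_norm ℝ (v n) (v m)
    have hn2 : ‖v n‖ * ‖v n‖ = ‖v n‖ ^ 2 := (sq ‖v n‖).symm
    have hB' : B p = a n + a m - a q * t p ^ 2 / 2 := rfl
    rw [hB']
    have han : a n = 2 * ‖v n‖ ^ 2 := rfl
    have ham : a m = 2 * ‖v m‖ ^ 2 := rfl
    nlinarith [sq_nonneg (‖v n + v m‖), hpar, hsq]
  have hD2 : Tendsto (fun p : ℕ × ℕ => ‖v (φ p.1) - v (φ p.2)‖ ^ 2) atTop (𝓝 0) :=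
    squeeze_zero' (Eventually.of_forall fun p => by positivity) hkey hB
  have hcauchy : CauchySeq fun k => v (φ k) := by
    rw [cauchySeq_iff_tendsto_dist_atTop_0]
    have h1 := (Real.continuous_sqrt.tendsto 0).comp hD2
    simp only [Function.comp, Real.sqrt_zero] at h1
    have h2 : ∀ p : ℕ × ℕ, Real.sqrt (‖v (φ p.1) - v (φ p.2)‖ ^ 2)
        = dist (v (φ p.1)) (v (φ p.2)) := fun p => by
      rw [Real.sqrt_sq (norm_nonneg _), dist_eq_norm]
    simpa only [Function.comp_def, h2] using h1
  obtain ⟨w, hw⟩ := cauchySeq_tendsto_of_complete hcauchy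
  -- the limit is admissible in V
  have hwV : w ∈ V := by
    rw [hV, Submodule.mem_iInf]
    intro m
    refine (hVsc m).mem_of_tendsto hw ?_
    filter_upwards [eventually_ge_atTop m] with k hk
    exact hanti (hk.trans hφ.le_apply) (hv1 (φ k))
  have hKw : K w = y := by
    have h1 : Tendsto (fun k => K (v (φ k))) atTop (𝓝 (K w)) :=
      (K.continuous.tendsto w).comp hw
    exact tendsto_nhds_unique h1 hyt
  have hKw1 : ‖K w‖ = 1 := by rw [hKw, hy1]
  have hwnorm : 2 * ‖w‖ ^ 2 = ℓ := by
    have h1 : Tendsto (fun k => a (φ k)) atTop (𝓝 ℓ) := ha.comp hφ.tendsto_atTop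
    have h2 : Tendsto (fun k => a (φ k)) atTop (𝓝 (2 * ‖w‖ ^ 2)) := by
      have := ((hw.norm).pow 2).const_mul 2
      simpa [hadef] using this
    exact tendsto_nhds_unique h2 h1
  calc muVal K V ≤ ENNReal.ofReal (2 * ‖w‖ ^ 2) := iInf₂_le _ ⟨hwV, hKw1⟩
    _ = L := by rw [hwnorm, hldef, ENNReal.ofReal_toReal hLtop]
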